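/- arXiv:1706.03525 — 2 statements merged into one kernel-verified Lean document; each statement's English description precedes it below -/
import Mathlib

section
/- Let 𝓛 ⊆ 𝒫(ℕ) be a subadditive family with accepted nonzero elasticity ρ, and let L ∈ 𝓛 with ρ(L) = ρ and n := inf L. If k ∈ ℕ⁺ and L' ∈ 𝓛 contains the k-fold sumset kL, then sup L' = nkρ, inf L' = nk, and ρ(L') = ρ. -/
open Pointwise Set ENNReal

/-- A family of subsets of ℕ is *subadditive* if for all `L₁, L₂` in the family
there is `L` in the family with `L₁ + L₂ ⊆ L` (sumset). -/
def Subadd (F : Set (Set ℕ)) : Prop :=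
  ∀ L₁ ∈ F, ∀ L₂ ∈ F, ∃ L ∈ F, L₁ + L₂ ⊆ L

/-- The set of distances of `L ⊆ ℕ`. -/
def DeltaSet (L : Set ℕ) : Set ℕ :=
  {d | 1 ≤ d ∧ ∃ l ∈ L, L ∩ Set.Icc l (l + d) = {l, l + d}}

/-- The set of distances of a family. -/
def DeltaFam (F : Set (Set ℕ)) : Set ℕ := ⋃ L ∈ F, DeltaSet L

/-- Unions of sets of the family containing `k`. -/
def UU (F : Set (Set ℕ)) (k : ℕ) : Set ℕ := ⋃ L ∈ {L ∈ F | k ∈ L}, L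

/-- gcd of a set of naturals: the greatest common divisor (with `gcd ∅ = 0`,
realized since the set of common divisors of `∅` is unbounded and `sSup` of an
unbounded set of naturals is `0`). -/
noncomputable def setGcd (S : Set ℕ) : ℕ := sSup {d | ∀ x ∈ S, d ∣ x}

noncomputable def supE (L : Set ℕ) : ℝ≥0∞ := sSup ((fun n : ℕ => (n : ℝ≥0∞)) '' L)

noncomputable def infE (L : Set ℕ) : ℝ≥0∞ := sInf ((fun n : ℕ => (n : ℝ≥0∞)) '' L)

/-- The elasticity `ρ(L) = sup L / inf L⁺` of a set, computed in `ℝ≥0∞`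
(conventions `sup ∅ = 0`, `inf ∅ = ∞`, `a/∞ = 0`, `a/0 = ∞` for `a > 0` hold in `ℝ≥0∞`). -/
noncomputable def elast (L : Set ℕ) : ℝ≥0∞ := supE L / infE (L \ {0})

/-- The elasticity `ρ(𝓛)` of a family. -/
noncomputable def famElast (F : Set (Set ℕ)) : ℝ≥0∞ := ⨆ L ∈ F, elast L

noncomputable def USupE (F : Set (Set ℕ)) (k : ℕ) : ℝ≥0∞ := supE (UU F k)

noncomputable def UInfE (F : Set (Set ℕ)) (k : ℕ) : ℝ≥0∞ := infE (UU F k)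

noncomputable def supN (L : Set ℕ) : ℕ∞ := sSup ((fun n : ℕ => (n : ℕ∞)) '' L)

noncomputable def infN (L : Set ℕ) : ℕ∞ := sInf ((fun n : ℕ => (n : ℕ∞)) '' L)

/-- `k`-fold sumset. -/
def nfold : ℕ → Set ℕ → Set ℕ
  | 0, _ => {0}
  | n + 1, L => nfold n L + L

lemma supE_eq (S : Set ℕ) (hne : S.Nonempty) (hbd : BddAbove S) :
    supE S = ((sSup S : ℕ) : ℝ≥0∞) := by
  apply le_antisymm
  · apply sSup_le
    rintro _ ⟨x, hx, rfl⟩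
    exact_mod_cast Nat.cast_le.mpr (le_csSup hbd hx)
  · exact le_sSup ⟨sSup S, Nat.sSup_mem hne hbd, rfl⟩

lemma infE_eq (S : Set ℕ) (hne : S.Nonempty) : infE S = ((sInf S : ℕ) : ℝ≥0∞) := by
  apply le_antisymm
  · exact sInf_le ⟨sInf S, Nat.sInf_mem hne, rfl⟩
  · apply le_sInf
    rintro _ ⟨x, hx, rfl⟩
    exact_mod_cast Nat.cast_le.mpr (Nat.sInf_le hx)

lemma le_supE {S : Set ℕ} {x : ℕ} (hx : x ∈ S) : (x : ℝ≥0∞) ≤ supE S :=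
  le_sSup ⟨x, hx, rfl⟩

lemma infE_le {S : Set ℕ} {x : ℕ} (hx : x ∈ S) : infE S ≤ (x : ℝ≥0∞) :=
  sInf_le ⟨x, hx, rfl⟩

lemma nfold_mul_mem {A : Set ℕ} {a : ℕ} (ha : a ∈ A) : ∀ j, j * a ∈ nfold j A
  | 0 => by simp [nfold]
  | j + 1 => by
      have h := Set.add_mem_add (nfold_mul_mem ha j) ha
      have : (j + 1) * a = j * a + a := by ring
      rw [this]
      exact h

lemma mem_nfold_of_zero {A : Set ℕ} {x : ℕ} (h0 : 0 ∈ A) (hx : x ∈ A) :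
    ∀ j, 0 < j → x ∈ nfold j A := by
  intro j hj
  induction j with
  | zero => exact absurd hj (lt_irrefl 0)
  | succ j ih =>
    rcases Nat.eq_zero_or_pos j with h | h
    · subst h
      have : (0 : ℕ) + x ∈ nfold 0 A + A :=
        Set.add_mem_add (by simp [nfold]) hx
      simpa [nfold] using this
    · have : x + 0 ∈ nfold j A + A := Set.add_mem_add (ih h) h0
      simpa [nfold] using this

lemma exists_nfold {F : Set (Set ℕ)} (hF : Subadd F) {A : Set ℕ} (hA : A ∈ F) :
    ∀ j, 0 < j → ∃ B ∈ F, nfold j A ⊆ B := by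
  intro j hj
  induction j with
  | zero => exact absurd hj (lt_irrefl 0)
  | succ j ih =>
    rcases Nat.eq_zero_or_pos j with h | h
    · subst h
      refine ⟨A, hA, ?_⟩
      have : nfold 1 A = {0} + A := rfl
      rw [this, Set.singleton_zero, zero_add]
    · obtain ⟨B, hB, hsub⟩ := ih h
      obtain ⟨C, hC, hsub2⟩ := hF B hB A hA
      exact ⟨C, hC, fun x hx =>
        hsub2 (Set.add_subset_add hsub (subset_refl A) hx)⟩

lemma elast_le_fam {F : Set (Set ℕ)} {A : Set ℕ} (hA : A ∈ F) :
    elast A ≤ famElast F := le_biSup _ hA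

lemma zero_not_mem {F : Set (Set ℕ)} (hF : Subadd F) (hfin : famElast F < ⊤)
    {A : Set ℕ} (hA : A ∈ F) {m : ℕ} (hm : m ∈ A) (hm0 : m ≠ 0) : 0 ∉ A := by
  intro h0
  have key : ∀ j : ℕ, (j : ℝ≥0∞) ≤ famElast F := by
    intro j
    rcases Nat.eq_zero_or_pos j with h | hj
    · simp [h]
    obtain ⟨B, hB, hsub⟩ := exists_nfold hF hA j hj
    have hjm : j * m ∈ B := hsub (nfold_mul_mem hm j)
    have hmB : m ∈ B := hsub (mem_nfold_of_zero h0 hm j hj)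
    have h1 : ((j * m : ℕ) : ℝ≥0∞) ≤ supE B := le_supE hjm
    have h2 : infE (B \ {0}) ≤ (m : ℝ≥0∞) := infE_le ⟨hmB, by simp [hm0]⟩
    have h3 : ((j * m : ℕ) : ℝ≥0∞) / (m : ℝ≥0∞) ≤ elast B :=
      ENNReal.div_le_div h1 h2
    have h4 : ((j * m : ℕ) : ℝ≥0∞) / (m : ℝ≥0∞) = (j : ℝ≥0∞) := by
      push_cast
      rw [mul_div_assoc, ENNReal.div_self (by exact_mod_cast hm0)
        (ENNReal.natCast_ne_top m), mul_one]
    calc (j : ℝ≥0∞) = _ := h4.symm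
      _ ≤ elast B := h3
      _ ≤ famElast F := elast_le_fam hB
  obtain ⟨j, hj⟩ := ENNReal.exists_nat_gt hfin.ne
  exact absurd (key j) (not_le.mpr hj)

lemma bdd_of_mem {F : Set (Set ℕ)} (hfin : famElast F < ⊤)
    {A : Set ℕ} (hA : A ∈ F) {m : ℕ} (hm : m ∈ A) (hm0 : m ≠ 0) : BddAbove A := by
  have hE : elast A ≤ famElast F := elast_le_fam hA
  have hinf : infE (A \ {0}) ≤ (m : ℝ≥0∞) := infE_le ⟨hm, by simp [hm0]⟩
  have hsup : supE A < ⊤ := by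
    by_contra h
    push_neg at h
    have hst : supE A = ⊤ := top_le_iff.mp h
    have : elast A = ⊤ := by
      rw [elast, hst]
      exact ENNReal.top_div_of_ne_top
        (lt_of_le_of_lt hinf (ENNReal.natCast_lt_top m)).ne
    rw [this] at hE
    exact absurd (lt_of_le_of_lt hE hfin) (lt_irrefl ⊤)
  obtain ⟨N, hN⟩ := ENNReal.exists_nat_gt hsup.ne
  refine ⟨N, fun x hx => ?_⟩
  have : (x : ℝ≥0∞) < (N : ℝ≥0∞) := lt_of_le_of_lt (le_supE hx) hN
  exact (Nat.cast_lt.mp this).le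

theorem stmt_13 (F : Set (Set ℕ)) (hF : Subadd F)
    (h1 : 1 ≤ famElast F) (hfin : famElast F < ⊤)
    (L : Set ℕ) (hL : L ∈ F) (hacc : elast L = famElast F)
    (k : ℕ) (hk : 0 < k) (L' : Set ℕ) (hL' : L' ∈ F) (hkL : nfold k L ⊆ L') :
    supE L' = ((sInf L * k : ℕ) : ℝ≥0∞) * famElast F ∧
      sInf L' = sInf L * k ∧ elast L' = famElast F := by
  -- L has a positive element
  obtain ⟨m, hmL, hm0⟩ : ∃ m ∈ L, m ≠ 0 := by
    by_contra h
    push_neg at h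
    have hd : L \ {0} = ∅ := by
      ext x; simp only [Set.mem_diff, Set.mem_singleton_iff, Set.mem_empty_iff_false,
        iff_false, not_and, not_not]
      exact fun hx => h x hx
    have : elast L = 0 := by
      rw [elast, hd]
      simp [infE]
    rw [hacc] at this
    rw [this] at h1
    exact absurd h1 (by simp)
  have h0L : 0 ∉ L := zero_not_mem hF hfin hL hmL hm0
  have hLne : L.Nonempty := ⟨m, hmL⟩
  have hLbd : BddAbove L := bdd_of_mem hfin hL hmL hm0
  set n := sInf L with hn
  set M := sSup L with hM
  have hnL : n ∈ L := Nat.sInf_mem hLne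
  have hML : M ∈ L := Nat.sSup_mem hLne hLbd
  have hn0 : n ≠ 0 := fun h => h0L (h ▸ hnL)
  have hM0 : M ≠ 0 := fun h => h0L (h ▸ hML)
  have hLd : L \ {0} = L := Set.diff_singleton_eq_self h0L
  have helL : elast L = (M : ℝ≥0∞) / (n : ℝ≥0∞) := by
    rw [elast, hLd, supE_eq L hLne hLbd, infE_eq L hLne]
  -- facts about L'
  have hknL' : k * n ∈ L' := hkL (nfold_mul_mem hnL k)
  have hkML' : k * M ∈ L' := hkL (nfold_mul_mem hML k)
  have hkn0 : k * n ≠ 0 := Nat.mul_ne_zero hk.ne' hn0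
  have h0L' : 0 ∉ L' := zero_not_mem hF hfin hL' hknL' hkn0
  have hL'ne : L'.Nonempty := ⟨k * n, hknL'⟩
  have hL'bd : BddAbove L' := bdd_of_mem hfin hL' hknL' hkn0
  set n' := sInf L' with hn'
  set M' := sSup L' with hM'
  have hn'L' : n' ∈ L' := Nat.sInf_mem hL'ne
  have hn'0 : n' ≠ 0 := fun h => h0L' (h ▸ hn'L')
  have hL'd : L' \ {0} = L' := Set.diff_singleton_eq_self h0L'
  have helL' : elast L' = (M' : ℝ≥0∞) / (n' : ℝ≥0∞) := by
    rw [elast, hL'd, supE_eq L' hL'ne hL'bd, infE_eq L' hL'ne]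
  have hle : elast L' ≤ famElast F := elast_le_fam hL'
  rw [helL', ← hacc, helL] at hle
  -- cross multiplication: M' * n ≤ M * n'
  have hcross : M' * n ≤ M * n' := by
    have h1' : (M' : ℝ≥0∞) ≤ (M : ℝ≥0∞) / (n : ℝ≥0∞) * (n' : ℝ≥0∞) :=
      (ENNReal.div_le_iff (by exact_mod_cast hn'0) (ENNReal.natCast_ne_top n')).mp hle
    have h2' : (M : ℝ≥0∞) / (n : ℝ≥0∞) * (n' : ℝ≥0∞)
        = (M : ℝ≥0∞) * (n' : ℝ≥0∞) / (n : ℝ≥0∞) := by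
      rw [div_eq_mul_inv, div_eq_mul_inv, mul_right_comm]
    have h3' : ((M' : ℝ≥0∞)) * (n : ℝ≥0∞) ≤ (M : ℝ≥0∞) * (n' : ℝ≥0∞) :=
      (ENNReal.le_div_iff_mul_le (Or.inl (by exact_mod_cast hn0))
        (Or.inl (ENNReal.natCast_ne_top n))).mp (h2' ▸ h1')
    exact_mod_cast h3'
  have hn'le : n' ≤ k * n := Nat.sInf_le hknL'
  have hM'ge : k * M ≤ M' := le_csSup hL'bd hkML'
  -- n' = k * n
  have hnn' : n' = k * n := by
    have h5 : M * (k * n) ≤ M * n' := by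
      calc M * (k * n) = (k * M) * n := by ring
        _ ≤ M' * n := Nat.mul_le_mul_right n hM'ge
        _ ≤ M * n' := hcross
    have := Nat.le_of_mul_le_mul_left h5 (Nat.pos_of_ne_zero hM0)
    omega
  -- M' = k * M
  have hMM' : M' = k * M := by
    have h6 : M' * n ≤ (k * M) * n := by
      calc M' * n ≤ M * n' := hcross
        _ = (k * M) * n := by rw [hnn']; ring
    have := Nat.le_of_mul_le_mul_right h6 (Nat.pos_of_ne_zero hn0)
    omega
  have hρ : famElast F = (M : ℝ≥0∞) / (n : ℝ≥0∞) := by rw [← hacc, helL]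
  refine ⟨?_, ?_, ?_⟩
  · rw [supE_eq L' hL'ne hL'bd, ← hM', hMM', hρ]
    push_cast
    rw [mul_comm (n : ℝ≥0∞) (k : ℝ≥0∞), mul_assoc,
      ENNReal.mul_div_cancel (by exact_mod_cast hn0) (ENNReal.natCast_ne_top n)]
  · exact hnn'.trans (Nat.mul_comm k n)
  · rw [helL', hρ, hnn', hMM']
    push_cast
    exact ENNReal.mul_div_mul_left (M : ℝ≥0∞) (n : ℝ≥0∞)
      (by exact_mod_cast hk.ne') (ENNReal.natCast_ne_top k)
end

section
/- Let 𝓛 ⊆ 𝒫(ℕ) be a subadditive family with Δ(𝓛) ≠ ∅, and set Δ_∪(𝓛) := ⋃_{k≥0} Δ(𝒰_k) where 𝒰_k := ⋃{L ∈ 𝓛 : k ∈ L}. Then Δ_∪(𝓛) ≠ ∅ and inf Δ_∪(𝓛) = gcd Δ_∪(𝓛) = gcd Δ(𝓛) = inf Δ(𝓛). -/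
open Pointwise Set ENNReal

lemma mem_UU {F : Set (Set ℕ)} {k a : ℕ} : a ∈ UU F k ↔ ∃ L, L ∈ F ∧ k ∈ L ∧ a ∈ L := by
  simp [UU, and_assoc]

lemma deltaSet_mem {S : Set ℕ} {d : ℕ} (h : d ∈ DeltaSet S) :
    1 ≤ d ∧ ∃ l, l ∈ S ∧ l + d ∈ S ∧ S ∩ Set.Icc l (l + d) = {l, l + d} := by
  obtain ⟨h1, l, hl, heq⟩ := h
  have hld : l + d ∈ S ∩ Set.Icc l (l + d) := by rw [heq]; right; rfl
  exact ⟨h1, l, hl, hld.1, heq⟩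

lemma succ_gap {S : Set ℕ} {a c : ℕ} (ha : a ∈ S) (hc : c ∈ S) (hac : a < c) :
    ∃ d₁, d₁ ∈ DeltaSet S ∧ 1 ≤ d₁ ∧ a + d₁ ≤ c := by
  have hcT : c ∈ {t | t ∈ S ∧ a < t} := ⟨hc, hac⟩
  have hs := Nat.sInf_mem ⟨c, hcT⟩
  set s := sInf {t | t ∈ S ∧ a < t} with hsdef
  have hsc : s ≤ c := Nat.sInf_le hcT
  have has2 : a < s := hs.2
  have has : a + (s - a) = s := by omega
  refine ⟨s - a, ⟨by omega, a, ha, ?_⟩, by omega, by omega⟩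
  rw [has]
  ext u
  simp only [Set.mem_inter_iff, Set.mem_Icc, Set.mem_insert_iff, Set.mem_singleton_iff]
  constructor
  · rintro ⟨huS, h1, h2⟩
    rcases eq_or_lt_of_le h1 with h | h
    · exact Or.inl h.symm
    · have : s ≤ u := Nat.sInf_le ⟨huS, h⟩
      exact Or.inr (by omega)
  · rintro (rfl | rfl)
    · exact ⟨ha, le_refl _, by omega⟩
    · exact ⟨hs.1, by omega, le_refl _⟩

lemma ap_in_family {G : Set (Set ℕ)} (hG : Subadd G) {L₁ : Set ℕ} (hL₁ : L₁ ∈ G)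
    {x m : ℕ} (hx : x ∈ L₁) (hxm : x + m ∈ L₁) (n : ℕ) :
    ∃ L' ∈ G, ∀ j ≤ n + 1, (n + 1) * x + j * m ∈ L' := by
  induction n with
  | zero =>
    refine ⟨L₁, hL₁, fun j hj => ?_⟩
    interval_cases j
    · simpa using hx
    · simpa using hxm
  | succ n ih =>
    obtain ⟨L', hL', hap⟩ := ih
    obtain ⟨L'', hL'', hsub⟩ := hG L' hL' L₁ hL₁
    refine ⟨L'', hL'', fun j hj => ?_⟩
    rcases Nat.lt_or_ge j (n + 2) with h | h
    · have he : (n + 1) * x + j * m + x = (n + 2) * x + j * m := by ring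
      have := hsub (Set.add_mem_add (hap j (by omega)) hx)
      rwa [he] at this
    · have hj2 : j = n + 2 := by omega
      subst hj2
      have he : (n + 1) * x + (n + 1) * m + (x + m) = (n + 2) * x + (n + 2) * m := by ring
      have := hsub (Set.add_mem_add (hap (n + 1) (by omega)) hxm)
      rwa [he] at this

lemma mem_deltaFam {G : Set (Set ℕ)} {d : ℕ} :
    d ∈ DeltaFam G ↔ ∃ L, L ∈ G ∧ d ∈ DeltaSet L := by
  simp [DeltaFam]

lemma one_le_of_mem_deltaFam {G : Set (Set ℕ)} {d : ℕ} (h : d ∈ DeltaFam G) : 1 ≤ d := by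
  obtain ⟨L, _, hd⟩ := mem_deltaFam.mp h
  exact hd.1

lemma min_delta_dvd {G : Set (Set ℕ)} (hG : Subadd G) (hne : (DeltaFam G).Nonempty) :
    ∀ d ∈ DeltaFam G, sInf (DeltaFam G) ∣ d := by
  intro d hd
  set m := sInf (DeltaFam G) with hmdef
  have hmmem : m ∈ DeltaFam G := Nat.sInf_mem hne
  obtain ⟨L₁, hL₁, hmd⟩ := mem_deltaFam.mp hmmem
  obtain ⟨hm1, x, hx, hxm, -⟩ := deltaSet_mem hmd
  obtain ⟨L₂, hL₂, hdd⟩ := mem_deltaFam.mp hd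
  obtain ⟨hd1, y, hy, hyd, -⟩ := deltaSet_mem hdd
  by_contra hndvd
  have hr : 0 < d % m := Nat.pos_of_ne_zero (fun h => hndvd (Nat.dvd_of_mod_eq_zero h))
  have hrm : d % m < m := Nat.mod_lt _ (by omega)
  obtain ⟨L', hL', hap⟩ := ap_in_family hG hL₁ hx hxm d
  obtain ⟨L₄, hL₄, hsub⟩ := hG L' hL' L₂ hL₂
  set q := d / m with hqdef
  have hq : q ≤ d + 1 := le_trans (Nat.div_le_self d m) (by omega)
  have hqm : q * m + d % m = d := by rw [mul_comm]; exact Nat.div_add_mod d m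
  have ha : (d + 1) * x + q * m + y ∈ L₄ := hsub (Set.add_mem_add (hap q hq) hy)
  have hc0 : (d + 1) * x + 0 * m + (y + d) ∈ L₄ :=
    hsub (Set.add_mem_add (hap 0 (by omega)) hyd)
  have he : (d + 1) * x + 0 * m + (y + d) = (d + 1) * x + y + d := by ring
  rw [he] at hc0
  have ha' : (d + 1) * x + q * m + y = (d + 1) * x + y + q * m := by ring
  rw [ha'] at ha
  have hlt : (d + 1) * x + y + q * m < (d + 1) * x + y + d := by
    have : q * m < d := by omega
    omega
  obtain ⟨d₁, hd₁mem, hd₁1, hd₁le⟩ := succ_gap ha hc0 hlt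
  have hd₁fam : d₁ ∈ DeltaFam G := mem_deltaFam.mpr ⟨L₄, hL₄, hd₁mem⟩
  have := Nat.sInf_le hd₁fam
  omega

lemma setGcd_eq {S : Set ℕ} {m : ℕ} (hm : m ∈ S) (h1 : 1 ≤ m) (hdvd : ∀ x ∈ S, m ∣ x) :
    setGcd S = m := by
  have hbdd : ∀ e ∈ {d | ∀ x ∈ S, d ∣ x}, e ≤ m := fun e he => Nat.le_of_dvd h1 (he m hm)
  refine le_antisymm (csSup_le ⟨m, hdvd⟩ hbdd) (le_csSup ⟨m, hbdd⟩ hdvd)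

lemma gcd_eq_min {G : Set (Set ℕ)} (hG : Subadd G) (hne : (DeltaFam G).Nonempty) :
    setGcd (DeltaFam G) = sInf (DeltaFam G) :=
  setGcd_eq (Nat.sInf_mem hne)
    (one_le_of_mem_deltaFam (Nat.sInf_mem hne)) (min_delta_dvd hG hne)

lemma subadd_UU {F : Set (Set ℕ)} (hF : Subadd F) : Subadd (Set.range (UU F)) := by
  rintro _ ⟨h, rfl⟩ _ ⟨k, rfl⟩
  refine ⟨UU F (h + k), ⟨h + k, rfl⟩, ?_⟩
  rintro z hz
  rw [Set.mem_add] at hz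
  obtain ⟨a, ha, b, hb, rfl⟩ := hz
  obtain ⟨L₁, hL₁, hh, haL⟩ := mem_UU.mp ha
  obtain ⟨L₂, hL₂, hk, hbL⟩ := mem_UU.mp hb
  obtain ⟨L, hL, hsub⟩ := hF L₁ hL₁ L₂ hL₂
  exact mem_UU.mpr ⟨L, hL, hsub (Set.add_mem_add hh hk), hsub (Set.add_mem_add haL hbL)⟩

lemma deltaFam_range_UU (F : Set (Set ℕ)) :
    DeltaFam (Set.range (UU F)) = ⋃ k : ℕ, DeltaSet (UU F k) := by
  simp [DeltaFam, Set.biUnion_range]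

theorem stmt_17 (F : Set (Set ℕ)) (hF : Subadd F) (hne : (DeltaFam F).Nonempty) :
    (⋃ k : ℕ, DeltaSet (UU F k)).Nonempty ∧
      sInf (⋃ k : ℕ, DeltaSet (UU F k)) = setGcd (⋃ k : ℕ, DeltaSet (UU F k)) ∧
        setGcd (⋃ k : ℕ, DeltaSet (UU F k)) = setGcd (DeltaFam F) ∧
          setGcd (DeltaFam F) = sInf (DeltaFam F) := by
  set U := ⋃ k : ℕ, DeltaSet (UU F k) with hUdef
  set m := sInf (DeltaFam F) with hmdef
  have hmmem : m ∈ DeltaFam F := Nat.sInf_mem hne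
  obtain ⟨L₀, hL₀, hm0⟩ := mem_deltaFam.mp hmmem
  obtain ⟨hm1, x, hx, hxm, -⟩ := deltaSet_mem hm0
  -- U is nonempty and sInf U ≤ m
  have hL₀sub : ∀ a ∈ L₀, a ∈ UU F x := fun a haa => mem_UU.mpr ⟨L₀, hL₀, hx, haa⟩
  obtain ⟨d', hd'mem, hd'1, hd'le⟩ :=
    succ_gap (hL₀sub x hx) (hL₀sub (x + m) hxm) (by omega)
  have hd'U : d' ∈ U := Set.mem_iUnion.mpr ⟨x, hd'mem⟩
  have hUne : U.Nonempty := ⟨d', hd'U⟩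
  have hle : sInf U ≤ m := le_trans (Nat.sInf_le hd'U) (by omega)
  -- m ≤ sInf U
  have hge : m ≤ sInf U := by
    have hdU := Nat.sInf_mem hUne
    set d := sInf U with hddef
    obtain ⟨k, hk⟩ := Set.mem_iUnion.mp hdU
    obtain ⟨hd1, l, hl, hld, heq⟩ := deltaSet_mem hk
    obtain ⟨L₁, hL₁, hk₁, hlL₁⟩ := mem_UU.mp hl
    obtain ⟨L₂, hL₂, hk₂, hldL₂⟩ := mem_UU.mp hld
    obtain ⟨L₃, hL₃, hsub⟩ := hF L₁ hL₁ L₂ hL₂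
    have h2k : k + k ∈ L₃ := hsub (Set.add_mem_add hk₁ hk₂)
    have hlk : l + k ∈ L₃ := hsub (Set.add_mem_add hlL₁ hk₂)
    have hlkd : l + k + d ∈ L₃ := by
      have := hsub (Set.add_mem_add hk₁ hldL₂)
      have he : k + (l + d) = l + k + d := by ring
      rwa [he] at this
    by_cases hcase : ∃ c ∈ L₃, l + k < c ∧ c < l + k + d
    · obtain ⟨c, hcL, hc1, hc2⟩ := hcase
      have hsubU : ∀ a ∈ L₃, a ∈ UU F (k + k) :=
        fun a haa => mem_UU.mpr ⟨L₃, hL₃, h2k, haa⟩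
      obtain ⟨d₁, hd₁mem, hd₁1, hd₁le⟩ := succ_gap (hsubU _ hlk) (hsubU _ hcL) hc1
      have hd₁U : d₁ ∈ U := Set.mem_iUnion.mpr ⟨k + k, hd₁mem⟩
      have := Nat.sInf_le hd₁U
      omega
    · push_neg at hcase
      have hdL₃ : d ∈ DeltaSet L₃ := by
        refine ⟨hd1, l + k, hlk, ?_⟩
        ext u
        simp only [Set.mem_inter_iff, Set.mem_Icc, Set.mem_insert_iff, Set.mem_singleton_iff]
        constructor
        · rintro ⟨huL, h1, h2⟩
          by_contra hcon
          push_neg at hcon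
          have := hcase u huL (by omega)
          omega
        · rintro (rfl | rfl)
          · exact ⟨hlk, le_refl _, by omega⟩
          · exact ⟨hlkd, by omega, le_refl _⟩
      exact Nat.sInf_le (mem_deltaFam.mpr ⟨L₃, hL₃, hdL₃⟩)
  have hinf : sInf U = m := le_antisymm hle hge
  have hUne' : (DeltaFam (Set.range (UU F))).Nonempty := by
    rw [deltaFam_range_UU]; exact hUne
  have hgcdU : setGcd U = sInf U := by
    rw [hUdef, ← deltaFam_range_UU]
    exact gcd_eq_min (subadd_UU hF) hUne'
  have hgcdF : setGcd (DeltaFam F) = m := gcd_eq_min hF hne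
  exact ⟨hUne, hgcdU.symm, by rw [hgcdU, hinf, hgcdF], by rw [hgcdF]⟩
end
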